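/- arXiv:0906.2280 — 4 statements merged into one kernel-verified Lean document; each statement's English description precedes it below -/
import Mathlib

section
/- For every c > 0 and z > 0 and y > 0, inf_{τ > 0} exp(-τy + c(e^{τz} - τz - 1)) = exp(-c · g(y/(cz))), where g(u) = (1+u)log(1+u) - u; the infimum is attained at τ = z⁻¹ log(1 + y/(cz)). -/
/-!
Writing `y = c z u` and `s = τ z`, the exponent is `c (eˢ - (1 + u) s - 1)`. By convexity of `exp`,
`eˢ ≥ (1 + u) (1 + s - log (1 + u))` (the tangent line at `s = log (1 + u)`), so the exponent is at
least `c (u - (1 + u) log (1 + u)) = -c g(u)`, with equality at the point of tangency.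
-/

open Real Set

theorem Real.mul_sub_log_add_one_le_exp {a : ℝ} (ha : 0 < a) (s : ℝ) :
    a * (s - log a + 1) ≤ exp s :=
  calc a * (s - log a + 1) ≤ a * exp (s - log a) := by
        gcongr; linarith [add_one_le_exp (s - log a)]
    _ = exp s := by rw [exp_sub, exp_log ha, mul_div_cancel₀ _ ha.ne']

theorem stmt10 (c z y : ℝ) (hc : 0 < c) (hz : 0 < z) (hy : 0 < y)
    (g : ℝ → ℝ) (hg : ∀ u : ℝ, g u = (1 + u) * Real.log (1 + u) - u) :
    sInf ((fun τ : ℝ => Real.exp (-τ * y + c * (Real.exp (τ * z) - τ * z - 1))) ''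
        Set.Ioi (0 : ℝ)) = Real.exp (-c * g (y / (c * z))) ∧
    (fun τ : ℝ => Real.exp (-τ * y + c * (Real.exp (τ * z) - τ * z - 1)))
        (z⁻¹ * Real.log (1 + y / (c * z))) = Real.exp (-c * g (y / (c * z))) := by
  set u := y / (c * z)
  have hu : 0 < u := by positivity
  have hexponent : ∀ τ, -τ * y + c * (exp (τ * z) - τ * z - 1) =
      c * (exp (τ * z) - (1 + u) * (τ * z) - 1) := by
    intro τ
    have hy_eq : y = c * z * u := by simp only [u]; field_simp
    rw [hy_eq]; ring
  have hgu : -c * g u = c * (u - (1 + u) * log (1 + u)) := by rw [hg]; ring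
  have hτ₀ : z⁻¹ * log (1 + u) * z = log (1 + u) := by field_simp
  have hmin : exp (-(z⁻¹ * log (1 + u)) * y +
      c * (exp (z⁻¹ * log (1 + u) * z) - z⁻¹ * log (1 + u) * z - 1)) = exp (-c * g u) := by
    rw [hexponent, hτ₀, exp_log (by linarith), hgu]; ring_nf
  refine ⟨IsLeast.csInf_eq ⟨⟨_, ?_, hmin⟩, ?_⟩, hmin⟩
  · exact mul_pos (inv_pos.2 hz) (log_pos (by linarith))
  · rintro _ ⟨τ, -, rfl⟩
    dsimp only
    rw [hexponent, hgu]
    have htangent := mul_sub_log_add_one_le_exp (show 0 < 1 + u by linarith) (τ * z)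
    exact exp_le_exp.2 (mul_le_mul_of_nonneg_left (by linarith) hc.le)
end

section
/- Let (X_t) be a Markov process with semigroup (P_t) having Wasserstein curvature σ > 0 and stationary distribution π with finite first moment. For φ L-Lipschitz, x ∈ X, t > 0, n ≥ 1 and t_k = kt/n, one has | (1/n) Σ_{k=1}^n E_x[φ(X_{t_k})] - π(φ) | ≤ ((1 - e^{-σt}) L /(σ t)) ∫ d(x,y) π(dy). -/
/-!
By invariance, `π(φ) = π(P_s φ)`, so `P_s φ(x) - π(φ)` is the `π`-average of `P_s φ(x) - P_s φ(y)`.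
The contraction makes `P_s φ` Lipschitz with constant `e^{-σs} L`, hence
`|P_s φ(x) - π(φ)| ≤ e^{-σs} L ∫ d(x,y) π(dy)`. Averaging over `s = kt/n` leaves the Riemann sum
`(1/n) Σ e^{-σkt/n}`, which lies below `∫₀¹ e^{-σtu} du = (1 - e^{-σt})/(σt)` since the integrand
is decreasing.
-/

open MeasureTheory Real Finset

open scoped NNReal

theorem LipschitzWith.abs_sub_integral_le {X : Type*} [PseudoMetricSpace X] [MeasurableSpace X]
    [OpensMeasurableSpace X] {μ : Measure X} [IsProbabilityMeasure μ] {K : ℝ≥0} {g : X → ℝ}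
    (hg : LipschitzWith K g) (x : X) (hμ : Integrable (fun y => dist x y) μ) :
    |g x - ∫ y, g y ∂μ| ≤ K * ∫ y, dist x y ∂μ := by
  have hdiff : ∀ y, |g x - g y| ≤ K * dist x y := fun y => by
    simpa [Real.dist_eq] using hg.dist_le_mul x y
  have hint : Integrable (fun y => g x - g y) μ :=
    (hμ.const_mul K).mono' (by have := hg.continuous; fun_prop) (Filter.Eventually.of_forall hdiff)
  have hgint : Integrable g μ :=
    ((integrable_const (g x)).sub hint).congr (Filter.Eventually.of_forall fun y => sub_sub_cancel _ _)
  calc |g x - ∫ y, g y ∂μ| = |∫ y, (g x - g y) ∂μ| := by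
        rw [integral_sub (integrable_const _) hgint, integral_const, probReal_univ, one_smul]
    _ ≤ ∫ y, |g x - g y| ∂μ := abs_integral_le_integral_abs
    _ ≤ ∫ y, K * dist x y ∂μ := integral_mono hint.abs (hμ.const_mul K) hdiff
    _ = K * ∫ y, dist x y ∂μ := integral_const_mul _ _

theorem sum_exp_neg_pow_mul_le (v : ℝ) (n : ℕ) :
    (∑ k ∈ Icc 1 n, exp (-v) ^ k) * v ≤ 1 - exp (-v) ^ n := by
  induction n with
  | zero => simp
  | succ n ih =>
    -- one step of the comparison with `∫ e^{-u} du`: `e^{-v} v ≤ 1 - e^{-v}` as `v + 1 ≤ e^v`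
    have hstep : exp (-v) * v ≤ 1 - exp (-v) := by
      have h := mul_le_mul_of_nonneg_left (add_one_le_exp v) (exp_pos (-v)).le
      rw [← exp_add, neg_add_cancel, exp_zero] at h
      linarith
    have hpow := mul_le_mul_of_nonneg_left hstep (pow_nonneg (exp_pos (-v)).le n)
    rw [sum_Icc_succ_top (by omega), add_mul, pow_succ]
    linarith

theorem riemann_sum_exp_neg_le {a : ℝ} (ha : 0 < a) (n : ℕ) :
    (1 / n : ℝ) * ∑ k ∈ Icc 1 n, exp (-a * (k / n)) ≤ (1 - exp (-a)) / a := by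
  rcases n.eq_zero_or_pos with rfl | hn
  · simp only [CharP.cast_eq_zero, div_zero, zero_mul]
    exact div_nonneg (by linarith [exp_le_one_iff.mpr (neg_nonpos.mpr ha.le)]) ha.le
  have hn' : (0 : ℝ) < n := by exact_mod_cast hn
  have hterm : ∀ k : ℕ, exp (-a * (k / n)) = exp (-(a / n)) ^ k := fun k => by
    rw [← exp_nat_mul]; ring_nf
  have hlast : exp (-(a / n)) ^ n = exp (-a) := by
    rw [← hterm, div_self hn'.ne', mul_one]
  have h := sum_exp_neg_pow_mul_le (a / n) n
  rw [hlast] at h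
  simp_rw [hterm]
  rw [le_div_iff₀ ha]
  calc 1 / n * (∑ k ∈ Icc 1 n, exp (-(a / n)) ^ k) * a
      = (∑ k ∈ Icc 1 n, exp (-(a / n)) ^ k) * (a / n) := by ring
    _ ≤ 1 - exp (-a) := h

theorem abs_average_sub_le {ι : Type*} (s : Finset ι) (hs : s.Nonempty) (f : ι → ℝ) (b : ℝ) :
    |(1 / #s : ℝ) * ∑ i ∈ s, f i - b| ≤ (1 / #s : ℝ) * ∑ i ∈ s, |f i - b| := by
  have hcard : (#s : ℝ) ≠ 0 := by exact_mod_cast hs.card_pos.ne'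
  have havg : (1 / #s : ℝ) * ∑ i ∈ s, f i - b = (1 / #s : ℝ) * ∑ i ∈ s, (f i - b) := by
    rw [sum_sub_distrib, sum_const, nsmul_eq_mul]
    field_simp
  rw [havg, abs_mul, abs_of_nonneg (by positivity)]
  exact mul_le_mul_of_nonneg_left (abs_sum_le_sum_abs _ _) (by positivity)

theorem stmt14_general {X : Type*} [MetricSpace X] [MeasurableSpace X] [BorelSpace X]
    (P : ℝ → X → Measure X)
    (σ : ℝ) (hσ : 0 < σ)
    (hcontr : ∀ s : ℝ, 0 < s → ∀ (L : ℝ), 0 ≤ L → ∀ f : X → ℝ,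
      (∀ a b : X, |f a - f b| ≤ L * dist a b) →
      ∀ a b : X, |(∫ y, f y ∂(P s a)) - ∫ y, f y ∂(P s b)| ≤
        Real.exp (-σ * s) * L * dist a b)
    (pim : Measure X) (hpim : IsProbabilityMeasure pim)
    (hpimmom : ∀ z : X, Integrable (fun y => dist z y) pim)
    (L : ℝ) (hL : 0 ≤ L) (φ : X → ℝ)
    (hφ : ∀ a b : X, |φ a - φ b| ≤ L * dist a b)
    (hinv : ∀ s : ℝ, 0 < s →
      ∫ a, (∫ y, φ y ∂(P s a)) ∂pim = ∫ y, φ y ∂pim) :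
    ∀ (x : X) (t : ℝ), 0 < t → ∀ n : ℕ, 1 ≤ n →
      |(1 / n : ℝ) * ∑ k ∈ Finset.Icc 1 n, (∫ y, φ y ∂(P (k * t / n) x)) -
          ∫ y, φ y ∂pim| ≤
        ((1 - Real.exp (-σ * t)) * L / (σ * t)) * ∫ y, dist x y ∂pim := by
  intro x t ht n hn
  set D := ∫ y, dist x y ∂pim
  have hD : 0 ≤ D := integral_nonneg fun y => dist_nonneg
  have ergodic : ∀ s, 0 < s → |∫ y, φ y ∂(P s x) - ∫ y, φ y ∂pim| ≤ exp (-σ * s) * L * D := by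
    intro s hs
    have hK : 0 ≤ exp (-σ * s) * L := by positivity
    have hlip : LipschitzWith (exp (-σ * s) * L).toNNReal (fun a => ∫ y, φ y ∂(P s a)) :=
      .of_dist_le_mul fun a b => by
        rw [Real.dist_eq, Real.coe_toNNReal _ hK]; exact hcontr s hs L hL φ hφ a b
    have h := hlip.abs_sub_integral_le x (hpimmom x)
    rwa [hinv s hs, Real.coe_toNNReal _ hK] at h
  have hIcc : (#(Icc 1 n) : ℝ) = n := by simp
  calc _ ≤ (1 / n : ℝ) * ∑ k ∈ Icc 1 n, |∫ y, φ y ∂(P (k * t / n) x) - ∫ y, φ y ∂pim| := by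
        simpa only [hIcc] using abs_average_sub_le (Icc 1 n) (nonempty_Icc.mpr hn) _ _
    _ ≤ (1 / n : ℝ) * ∑ k ∈ Icc 1 n, exp (-(σ * t) * (k / n)) * (L * D) := by
        gcongr with k hk
        have hk : (0 : ℝ) < k * t / n := by
          have := (mem_Icc.mp hk).1
          positivity
        rw [show -(σ * t) * (k / n) = -σ * (k * t / n) by ring, ← mul_assoc]
        exact ergodic _ hk
    _ = ((1 / n : ℝ) * ∑ k ∈ Icc 1 n, exp (-(σ * t) * (k / n))) * (L * D) := by
        rw [← sum_mul, mul_assoc]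
    _ ≤ (1 - exp (-(σ * t))) / (σ * t) * (L * D) := by
        gcongr
        exact riemann_sum_exp_neg_le (by positivity) n
    _ = ((1 - Real.exp (-σ * t)) * L / (σ * t)) * D := by rw [neg_mul]; ring

theorem stmt14 {X : Type*} [MetricSpace X] [MeasurableSpace X] [BorelSpace X]
    (P : ℝ → X → Measure X)
    (hprob : ∀ s x, IsProbabilityMeasure (P s x))
    (σ : ℝ) (hσ : 0 < σ)
    (hcontr : ∀ s : ℝ, 0 < s → ∀ (L : ℝ), 0 ≤ L → ∀ f : X → ℝ,
      (∀ a b : X, |f a - f b| ≤ L * dist a b) →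
      ∀ a b : X, |(∫ y, f y ∂(P s a)) - ∫ y, f y ∂(P s b)| ≤
        Real.exp (-σ * s) * L * dist a b)
    (pim : Measure X) (hpim : IsProbabilityMeasure pim)
    (hpimmom : ∀ z : X, Integrable (fun y => dist z y) pim)
    (L : ℝ) (hL : 0 ≤ L) (φ : X → ℝ)
    (hφ : ∀ a b : X, |φ a - φ b| ≤ L * dist a b)
    (hφint : Integrable φ pim)
    (hφint' : ∀ s : ℝ, 0 < s → ∀ a : X, Integrable φ (P s a))
    (hinv : ∀ s : ℝ, 0 < s →
      ∫ a, (∫ y, φ y ∂(P s a)) ∂pim = ∫ y, φ y ∂pim) :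
    ∀ (x : X) (t : ℝ), 0 < t → ∀ n : ℕ, 1 ≤ n →
      |(1 / n : ℝ) * ∑ k ∈ Finset.Icc 1 n, (∫ y, φ y ∂(P (k * t / n) x)) -
          ∫ y, φ y ∂pim| ≤
        ((1 - Real.exp (-σ * t)) * L / (σ * t)) * ∫ y, dist x y ∂pim :=
  stmt14_general P σ hσ hcontr pim hpim hpimmom L hL φ hφ hinv
end

section
/- Consider a birth–death process on ℕ with birth rates λ_x > 0 and death rates ν_x > 0 (ν_0 = 0), and the metric δ(x,y) = |Σ_{k=0}^{x-1} u_k - Σ_{k=0}^{y-1} u_k| for a positive weight sequence (u_x). If α := inf_{x ∈ ℕ} { ν_{x+1} + λ_x - ν_x u_{x-1}/u_x - λ_{x+1} u_{x+1}/u_x } (with u_{-1} = 1, ν_0 = 0), then for the classical coupling operator L̃ one has L̃δ(x,y) ≤ -α δ(x,y) for all x, y ∈ ℕ, given that L̃δ(x, x+1) ≤ -α δ(x, x+1) for every x; this follows from the telescoping identities L̃δ(x,y) = Σ_{k=x}^{y-1} L̃δ(k,k+1) and δ(x,y) = Σ_{k=x}^{y-1} δ(k,k+1) for x < y. -/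
/-- The weighted path metric δ on ℕ: δ(x,y) = Σ_{k=min}^{max-1} u_k. -/
def pathDist (u : ℕ → ℝ) (x y : ℕ) : ℝ :=
  ∑ k ∈ Finset.Ico (min x y) (max x y), u k

/-- The classical coupling operator applied to δ:
L̃δ(x,y) = λ_Y u_Y - ν_Y u_{Y-1} - λ_X u_X + ν_X u_{X-1} where X = min, Y = max
(here `u (0-1) = u 0` by ℕ-subtraction, harmless since ν_0 = 0). -/
def couplingL (lam nu u : ℕ → ℝ) (x y : ℕ) : ℝ :=
  lam (max x y) * u (max x y) - nu (max x y) * u (max x y - 1)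
    - lam (min x y) * u (min x y) + nu (min x y) * u (min x y - 1)

theorem stmt16 (lam nu u : ℕ → ℝ)
    (hlam : ∀ x, 0 < lam x) (hnu : ∀ x, 1 ≤ x → 0 < nu x) (hnu0 : nu 0 = 0)
    (hu : ∀ x, 0 < u x) (α : ℝ)
    (hα : ∀ k : ℕ, couplingL lam nu u k (k + 1) ≤ -α * pathDist u k (k + 1)) :
    ∀ x y : ℕ, couplingL lam nu u x y ≤ -α * pathDist u x y := by
  -- f k := λ_k u_k - ν_k u_{k-1}; for x ≤ y, couplingL x y = f y - f x.
  have key : ∀ x y : ℕ, x ≤ y → couplingL lam nu u x y ≤ -α * pathDist u x y := by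
    intro x y hxy
    induction y with
    | zero =>
      interval_cases x
      simp [couplingL, pathDist]
    | succ n ih =>
      rcases Nat.lt_or_ge x (n + 1) with h | h
      · have hxn : x ≤ n := Nat.lt_succ_iff.mp h
        have h1 : couplingL lam nu u x (n + 1)
            = couplingL lam nu u x n + couplingL lam nu u n (n + 1) := by
          simp only [couplingL, min_eq_left hxn, max_eq_right hxn,
            min_eq_left (Nat.le_succ_of_le hxn), max_eq_right (Nat.le_succ_of_le hxn),
            min_eq_left (Nat.le_succ n), max_eq_right (Nat.le_succ n)]
          ring
        have h2 : pathDist u x (n + 1) = pathDist u x n + pathDist u n (n + 1) := by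
          simp only [pathDist, min_eq_left hxn, max_eq_right hxn,
            min_eq_left (Nat.le_succ_of_le hxn), max_eq_right (Nat.le_succ_of_le hxn),
            min_eq_left (Nat.le_succ n), max_eq_right (Nat.le_succ n)]
          rw [← Finset.sum_Ico_consecutive u hxn (Nat.le_succ n)]
        rw [h1, h2, mul_add]
        exact add_le_add (ih hxn) (hα n)
      · have hx : x = n + 1 := le_antisymm hxy h
        subst hx
        simp [couplingL, pathDist]
  intro x y
  rcases le_total x y with h | h
  · exact key x y h
  · have e1 : couplingL lam nu u x y = couplingL lam nu u y x := by
      simp [couplingL, min_comm, max_comm]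
    have e2 : pathDist u x y = pathDist u y x := by
      simp [pathDist, min_comm, max_comm]
    rw [e1, e2]
    exact key y x h
end

section
/- For the M/M/∞ queue with λ_x = λ (constant), ν_x = νx, intensity ξ = λ/ν = 1, and weight u_x = (x+1)^{-1/2}, the quantity σ_δ = inf_{x ∈ ℕ} { ν(x+1) + λ - νx·u_{x-1}/u_x - λ·u_{x+1}/u_x } satisfies σ_δ ≥ ν/2; i.e., for every x ∈ ℕ: ν(x+1) + ν - νx·√((x+1)/x) - ν·√((x+1)/(x+2)) ≥ ν/2 (with the x = 0 term read as ν + ν - 0 - ν√(1/2) ≥ ν/2, using u_{-1} = 1). -/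
theorem Real.mul_sqrt_add_one_div_self {t : ℝ} (ht : 0 ≤ t) :
    t * √((t + 1) / t) = √(t * (t + 1)) := by
  rcases ht.eq_or_lt with rfl | hpos
  · simp
  · rw [show t * (t + 1) = t ^ 2 * ((t + 1) / t) by field_simp, Real.sqrt_mul (sq_nonneg t),
      Real.sqrt_sq ht]

/-- AM-GM for `t` and `t + 1`. -/
theorem Real.mul_sqrt_add_one_div_self_le {t : ℝ} (ht : 0 ≤ t) :
    t * √((t + 1) / t) ≤ t + 1 / 2 := by
  rw [Real.mul_sqrt_add_one_div_self ht, Real.sqrt_le_iff]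
  constructor <;> nlinarith

theorem stmt19 (ν : ℝ) (hν : 0 < ν) :
    ∀ x : ℕ,
      ν / 2 ≤ ν * ((x : ℝ) + 1) + ν - ν * (x : ℝ) * Real.sqrt (((x : ℝ) + 1) / x)
        - ν * Real.sqrt (((x : ℝ) + 1) / ((x : ℝ) + 2)) := by
  intro x
  have hx : (0 : ℝ) ≤ x := x.cast_nonneg
  have h_death : (x : ℝ) * √((x + 1) / x) ≤ x + 1 / 2 := Real.mul_sqrt_add_one_div_self_le hx
  have h_birth : √(((x : ℝ) + 1) / (x + 2)) ≤ 1 :=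
    Real.sqrt_le_one.mpr (div_le_one_of_le₀ (by linarith) (by positivity))
  have h_bracket : 1 / 2 ≤ (x + 1) + 1 - x * √((x + 1) / x) - √(((x : ℝ) + 1) / (x + 2)) := by
    linarith
  calc ν / 2 = ν * (1 / 2) := by ring
    _ ≤ ν * ((x + 1) + 1 - x * √((x + 1) / x) - √(((x : ℝ) + 1) / (x + 2))) :=
      mul_le_mul_of_nonneg_left h_bracket hν.le
    _ = _ := by ring
end
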